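/- Let f : X → ℝ and μ : X → ℝ be Lipschitz continuous on a compact set X ⊂ ℝᵐ with constants L_f and L_μ, and let σ² : X → ℝ≥0 be Lipschitz with constant L_{σ²}. Suppose {x₁,...,x_M} is a ρ-cover of X and |f(xᵢ) − μ(xᵢ)| ≤ √β·σ(xᵢ) for every grid point xᵢ, where β > 0. Then for every x ∈ X: |f(x) − μ(x)| ≤ √β·σ(x) + (L_f + L_μ)ρ + √(β·L_{σ²}·ρ). -/
import Mathlib


/-- Extension of pointwise GP error bounds on a `ρ`-cover to a uniform bound:
for Lipschitz `f`, `μ`, `σ²` with a `ρ`-cover on which `|f − μ| ≤ √β·σ`,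
every `x` satisfies `|f(x) − μ(x)| ≤ √β·σ(x) + (L_f + L_μ)ρ + √(βL_{σ²}ρ)`. -/
theorem uniform_error_from_cover {m : ℕ}
    (K : Set (EuclideanSpace ℝ (Fin m))) (hK : IsCompact K)
    (f μ σsq : EuclideanSpace ℝ (Fin m) → ℝ)
    (Lf Lμ Lσ β ρ : ℝ) (hLf : 0 ≤ Lf) (hLμ : 0 ≤ Lμ) (hLσ : 0 ≤ Lσ)
    (hβ : 0 < β) (hρ : 0 < ρ)
    (hfLip : ∀ x ∈ K, ∀ y ∈ K, |f x - f y| ≤ Lf * dist x y)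
    (hμLip : ∀ x ∈ K, ∀ y ∈ K, |μ x - μ y| ≤ Lμ * dist x y)
    (hσLip : ∀ x ∈ K, ∀ y ∈ K, |σsq x - σsq y| ≤ Lσ * dist x y)
    (hσnonneg : ∀ x ∈ K, 0 ≤ σsq x)
    (s : Finset (EuclideanSpace ℝ (Fin m))) (hs : ↑s ⊆ K)
    (hcover : ∀ x ∈ K, ∃ y ∈ s, dist x y ≤ ρ)
    (hgrid : ∀ y ∈ s, |f y - μ y| ≤ Real.sqrt β * Real.sqrt (σsq y)) :
    ∀ x ∈ K, |f x - μ x|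
      ≤ Real.sqrt β * Real.sqrt (σsq x) + (Lf + Lμ) * ρ
        + Real.sqrt (β * Lσ * ρ) := by
  intro x hx
  obtain ⟨y, hys, hdy⟩ := hcover x hx
  have hyK : y ∈ K := hs hys
  have h1 : |f x - μ x| ≤ |f y - μ y| + (Lf + Lμ) * ρ := by
    have hf := hfLip x hx y hyK
    have hμ' := hμLip x hx y hyK
    have : |f x - μ x| ≤ |f y - μ y| + |f x - f y| + |μ x - μ y| := by
      have : f x - μ x = (f y - μ y) + (f x - f y) - (μ x - μ y) := by ring
      rw [this]
      calc |(f y - μ y) + (f x - f y) - (μ x - μ y)|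
          ≤ |(f y - μ y) + (f x - f y)| + |μ x - μ y| := abs_sub _ _
        _ ≤ |f y - μ y| + |f x - f y| + |μ x - μ y| := by
            gcongr; exact abs_add_le _ _
    refine this.trans ?_
    have hfd : |f x - f y| ≤ Lf * ρ := hf.trans (by nlinarith [dist_nonneg (x:=x) (y:=y)])
    have hμd : |μ x - μ y| ≤ Lμ * ρ := hμ'.trans (by nlinarith [dist_nonneg (x:=x) (y:=y)])
    nlinarith
  have hσy : Real.sqrt (σsq y) ≤ Real.sqrt (σsq x) + Real.sqrt (Lσ * ρ) := by
    have hσ := hσLip y hyK x hx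
    have hdy' : dist y x ≤ ρ := by rwa [dist_comm]
    have h2 : σsq y ≤ σsq x + Lσ * ρ := by
      have : σsq y - σsq x ≤ Lσ * dist y x := (le_abs_self _).trans hσ
      nlinarith [dist_nonneg (x:=y) (y:=x)]
    calc Real.sqrt (σsq y) ≤ Real.sqrt (σsq x + Lσ * ρ) := Real.sqrt_le_sqrt h2
      _ ≤ Real.sqrt (σsq x) + Real.sqrt (Lσ * ρ) := by
          have hab : σsq x + Lσ * ρ ≤ (Real.sqrt (σsq x) + Real.sqrt (Lσ * ρ)) ^ 2 := by
            nlinarith [Real.sq_sqrt (hσnonneg x hx),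
              Real.sq_sqrt (show (0:ℝ) ≤ Lσ * ρ by positivity),
              Real.sqrt_nonneg (σsq x), Real.sqrt_nonneg (Lσ * ρ)]
          calc Real.sqrt (σsq x + Lσ * ρ)
              ≤ Real.sqrt ((Real.sqrt (σsq x) + Real.sqrt (Lσ * ρ)) ^ 2) :=
                Real.sqrt_le_sqrt hab
            _ = _ := Real.sqrt_sq (by positivity)
  have hsb : Real.sqrt β * Real.sqrt (Lσ * ρ) = Real.sqrt (β * Lσ * ρ) := by
    rw [← Real.sqrt_mul hβ.le, mul_assoc]
  have hgb := hgrid y hys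
  have hβs : (0:ℝ) ≤ Real.sqrt β := Real.sqrt_nonneg _
  calc |f x - μ x| ≤ |f y - μ y| + (Lf + Lμ) * ρ := h1
    _ ≤ Real.sqrt β * Real.sqrt (σsq y) + (Lf + Lμ) * ρ := by gcongr
    _ ≤ Real.sqrt β * (Real.sqrt (σsq x) + Real.sqrt (Lσ * ρ)) + (Lf + Lμ) * ρ := by gcongr
    _ = Real.sqrt β * Real.sqrt (σsq x) + (Lf + Lμ) * ρ + Real.sqrt β * Real.sqrt (Lσ * ρ) := by ring
    _ = _ := by rw [hsb]
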